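/- arXiv:2601.10746 — 2 statements merged into one kernel-verified Lean document; each statement's English description precedes it below -/
import Mathlib

section
/- Suppose S and D' are matrices with S D' = −I, Φ₃ = S Φ₁ S, Φ₄ = S Φ₂ S, Γ₃ = −S Γ₁, Γ₄ = −S Γ₂, and define H(X) = Φ₂Φ₁X + Φ₂Γ₁ + Γ₂ and G(Z) = Φ₄Φ₃Z + Φ₄Γ₃ + Γ₄. If H(X₀) = D' X₀, then G(H(X₀)) = X₀; that is, the half-cycle flip condition implies the full four-step periodicity X₄ = X₀. -/
open Matrix

/-- Half-cycle flip condition implies four-step closure: if `H(X₀) = D' X₀`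
then `G(H(X₀)) = X₀`. -/
theorem stmt6 {d : ℕ}
    (Φ₁ Φ₂ S D' : Matrix (Fin d) (Fin d) ℝ)
    (hS : S * S = 1) (hSD : S * D' = -1)
    (Γ₁ Γ₂ : Fin d → ℝ)
    (Φ₃ Φ₄ : Matrix (Fin d) (Fin d) ℝ) (hΦ₃ : Φ₃ = S * Φ₁ * S) (hΦ₄ : Φ₄ = S * Φ₂ * S)
    (Γ₃ Γ₄ : Fin d → ℝ) (hΓ₃ : Γ₃ = -(S *ᵥ Γ₁)) (hΓ₄ : Γ₄ = -(S *ᵥ Γ₂))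
    (H G : (Fin d → ℝ) → (Fin d → ℝ))
    (hH : ∀ X, H X = (Φ₂ * Φ₁) *ᵥ X + Φ₂ *ᵥ Γ₁ + Γ₂)
    (hG : ∀ Z, G Z = (Φ₄ * Φ₃) *ᵥ Z + Φ₄ *ᵥ Γ₃ + Γ₄)
    (X₀ : Fin d → ℝ) (hflip : H X₀ = D' *ᵥ X₀) :
    G (H X₀) = X₀ := by
  have hHX := hH X₀
  rw [hflip] at hHX
  rw [hG, hflip, hΦ₃, hΦ₄, hΓ₃, hΓ₄]
  have hM : S * Φ₂ * S * (S * Φ₁ * S) * D' = -(S * (Φ₂ * Φ₁)) := by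
    have : S * Φ₂ * S * (S * Φ₁ * S) * D' = S * Φ₂ * (S * S) * Φ₁ * (S * D') := by
      simp only [Matrix.mul_assoc]
    rw [this, hS, hSD]
    simp [Matrix.mul_assoc]
  have key : (S * Φ₂ * S * (S * Φ₁ * S)) *ᵥ (D' *ᵥ X₀) + (S * Φ₂ * S) *ᵥ (-(S *ᵥ Γ₁)) + -(S *ᵥ Γ₂)
      = -(S *ᵥ ((Φ₂ * Φ₁) *ᵥ X₀ + Φ₂ *ᵥ Γ₁ + Γ₂)) := by
    rw [Matrix.mulVec_mulVec, hM]
    simp [Matrix.mulVec_add, Matrix.neg_mulVec, Matrix.mulVec_neg, Matrix.mulVec_mulVec,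
      Matrix.mul_assoc, hS]
    abel
  rw [key, ← hHX, Matrix.mulVec_mulVec, hSD]
  simp [Matrix.neg_mulVec]
end

section
/- Under the DAB symmetry assumptions, if H(X₀) = D'X₀ then G∘H(X₀) = X₀, i.e., the full four-step fixed point condition X₄ = X₀ holds (sufficiency of the half-cycle condition for full-period periodicity). -/
open Matrix

lemma step8 {d : ℕ} (S Φ : Matrix (Fin d) (Fin d) ℝ) (Γ Y W : Fin d → ℝ)
    (h : S *ᵥ Y = -W) :
    (S * Φ * S) *ᵥ Y + -(S *ᵥ Γ) = -(S *ᵥ (Φ *ᵥ W + Γ)) := by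
  rw [← Matrix.mulVec_mulVec, ← Matrix.mulVec_mulVec, h, Matrix.mulVec_neg,
    Matrix.mulVec_neg, Matrix.mulVec_add]
  abel

/-- Sufficiency of the half-cycle condition for full-period periodicity:
with `X₁,…,X₄` the four-step trajectory, `H(X₀) = D' X₀` implies `X₄ = X₀`. -/
theorem stmt8 {d : ℕ}
    (Φ₁ Φ₂ S D' : Matrix (Fin d) (Fin d) ℝ)
    (hS : S * S = 1) (hSD : S * D' = -1)
    (Γ₁ Γ₂ : Fin d → ℝ)
    (Φ₃ Φ₄ : Matrix (Fin d) (Fin d) ℝ) (hΦ₃ : Φ₃ = S * Φ₁ * S) (hΦ₄ : Φ₄ = S * Φ₂ * S)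
    (Γ₃ Γ₄ : Fin d → ℝ) (hΓ₃ : Γ₃ = -(S *ᵥ Γ₁)) (hΓ₄ : Γ₄ = -(S *ᵥ Γ₂))
    (X₀ X₁ X₂ X₃ X₄ : Fin d → ℝ)
    (h1 : X₁ = Φ₁ *ᵥ X₀ + Γ₁) (h2 : X₂ = Φ₂ *ᵥ X₁ + Γ₂)
    (h3 : X₃ = Φ₃ *ᵥ X₂ + Γ₃) (h4 : X₄ = Φ₄ *ᵥ X₃ + Γ₄)
    (hflip : X₂ = D' *ᵥ X₀) :
    X₄ = X₀ := by
  have hSX₂ : S *ᵥ X₂ = -X₀ := by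
    rw [hflip, Matrix.mulVec_mulVec, hSD, Matrix.neg_mulVec, Matrix.one_mulVec]
  have hX₃ : X₃ = -(S *ᵥ X₁) := by
    rw [h3, hΦ₃, hΓ₃, h1]
    exact step8 S Φ₁ Γ₁ X₂ X₀ hSX₂
  have hSX₃ : S *ᵥ X₃ = -X₁ := by
    rw [hX₃, Matrix.mulVec_neg, Matrix.mulVec_mulVec, hS, Matrix.one_mulVec]
  have hX₄ : X₄ = -(S *ᵥ X₂) := by
    rw [h4, hΦ₄, hΓ₄, h2]
    exact step8 S Φ₂ Γ₂ X₃ X₁ hSX₃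
  rw [hX₄, hSX₂, neg_neg]
end
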